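/- If an instance (G,D,Δ) of the periodic upper-bounded temporal tree realization problem with a tree G is a yes-instance, then it has a solution λ such that for every degree-2 vertex v of G with neighbors u and w, λ({u,v}) ≠ λ({v,w}). -/

import Mathlib

/-!
Root the tree at `r`. Shifting both labels at a vertex cyclically by the same amount leaves the
travel delay there unchanged, and the delay between two equal labels is already the maximum `Δ`,
so it cannot grow under any shift. Shift each edge by the number of equal-label degree-2
vertices on the path from `r` to its far endpoint: the shift is then constant around every other
vertex and jumps by one across each equal-label degree-2 vertex, whose two labels become distinct
because `Δ ≥ 2`. If `r` itself is such a vertex, only the edge from `r` to one chosen neighbour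
`c` receives the extra shift.
-/

def tdelay (Δ a b : ℤ) : ℤ := if a < b then b - a else b - a + Δ

def listDelay {V : Type*} (Δ : ℤ) (lab : V → V → ℤ) : List V → ℤ
  | a :: b :: c :: rest => tdelay Δ (lab a b) (lab b c) + listDelay Δ lab (b :: c :: rest)
  | _ => 0

def Realizes {V : Type*} (G : SimpleGraph V) (Δ : ℤ) (lab : V → V → ℤ)
    (D : V → V → ℤ) : Prop :=
  ∀ s t (p : G.Walk s t), p.IsPath → 1 + listDelay Δ lab p.support ≤ D s t

section CyclicShift

variable {Δ s a b : ℤ}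

def cycShift (Δ s a : ℤ) : ℤ := (a + s - 1) % Δ + 1

lemma cycShift_mem (hΔ : 0 < Δ) : cycShift Δ s a ∈ Set.Icc 1 Δ := by
  have := Int.emod_nonneg (a + s - 1) hΔ.ne'
  have := Int.emod_lt_of_pos (a + s - 1) hΔ
  constructor <;> unfold cycShift <;> omega

lemma cycShift_sub_one_modEq : cycShift Δ s a - 1 ≡ a + s - 1 [ZMOD Δ] := by
  simpa [cycShift] using Int.mod_modEq (a + s - 1) Δ

lemma sub_one_emod_eq_of_mem_Icc (ha : a ∈ Set.Icc 1 Δ) : (a - 1) % Δ = a - 1 :=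
  Int.emod_eq_of_lt (by linarith [ha.1]) (by linarith [ha.2])

lemma tdelay_eq_emod (ha : a ∈ Set.Icc 1 Δ) (hb : b ∈ Set.Icc 1 Δ) :
    tdelay Δ a b = (b - a - 1) % Δ + 1 := by
  obtain ⟨ha1, ha2⟩ := ha
  obtain ⟨hb1, hb2⟩ := hb
  unfold tdelay
  split_ifs
  · rw [Int.emod_eq_of_lt (by omega) (by omega)]; ring
  · rw [← Int.add_emod_right, Int.emod_eq_of_lt (by omega) (by omega)]; ring

lemma tdelay_le (ha : a ∈ Set.Icc 1 Δ) (hb : b ∈ Set.Icc 1 Δ) : tdelay Δ a b ≤ Δ := by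
  obtain ⟨ha1, ha2⟩ := ha
  obtain ⟨hb1, hb2⟩ := hb
  unfold tdelay
  split_ifs <;> omega

lemma tdelay_cycShift (hΔ : 0 < Δ) (ha : a ∈ Set.Icc 1 Δ) (hb : b ∈ Set.Icc 1 Δ) :
    tdelay Δ (cycShift Δ s a) (cycShift Δ s b) = tdelay Δ a b := by
  rw [tdelay_eq_emod (cycShift_mem hΔ) (cycShift_mem hΔ), tdelay_eq_emod ha hb]
  have hmod : cycShift Δ s b - cycShift Δ s a - 1 ≡ b - a - 1 [ZMOD Δ] := by
    convert ((cycShift_sub_one_modEq (s := s) (a := b)).sub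
      (cycShift_sub_one_modEq (a := a))).sub_right 1 using 1 <;> ring
  rw [hmod]

lemma eq_of_cycShift_eq (ha : a ∈ Set.Icc 1 Δ) (hb : b ∈ Set.Icc 1 Δ)
    (h : cycShift Δ s a = cycShift Δ s b) : a = b := by
  have h' : a - 1 + s ≡ b - 1 + s [ZMOD Δ] := by
    unfold cycShift at h
    unfold Int.ModEq
    convert add_right_cancel h using 2 <;> ring
  have := Int.ModEq.add_right_cancel' s h'
  unfold Int.ModEq at this
  rw [sub_one_emod_eq_of_mem_Icc ha, sub_one_emod_eq_of_mem_Icc hb] at this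
  omega

lemma cycShift_add_one_ne (hΔ : 2 ≤ Δ) : cycShift Δ (s + 1) a ≠ cycShift Δ s a := by
  intro h
  have h' : a + s ≡ a + s - 1 [ZMOD Δ] := by
    unfold cycShift at h
    unfold Int.ModEq
    convert add_right_cancel h using 2; ring
  have := Int.le_of_dvd one_pos (by simpa using h'.symm.dvd)
  omega

end CyclicShift

section Relabel

open SimpleGraph

variable {V : Type*} {G : SimpleGraph V} {Δ : ℤ} {lab s : V → V → ℤ}

def shiftLabels (Δ : ℤ) (lab s : V → V → ℤ) (x y : V) : ℤ := cycShift Δ (s x y) (lab x y)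

lemma tdelay_shiftLabels_le (hΔ : 0 < Δ) (hlab : ∀ x y, G.Adj x y → lab x y ∈ Set.Icc 1 Δ)
    {a b c : V} (hab : G.Adj a b) (hbc : G.Adj b c) (h : s a b = s b c ∨ lab a b = lab b c) :
    tdelay Δ (shiftLabels Δ lab s a b) (shiftLabels Δ lab s b c) ≤ tdelay Δ (lab a b) (lab b c) := by
  rcases h with h | h
  · rw [shiftLabels, shiftLabels, h, tdelay_cycShift hΔ (hlab a b hab) (hlab b c hbc)]
  · have hmax : tdelay Δ (lab a b) (lab b c) = Δ := by
      rw [tdelay, h, if_neg (lt_irrefl _)]; ring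
    rw [hmax]
    exact tdelay_le (cycShift_mem hΔ) (cycShift_mem hΔ)

lemma listDelay_shiftLabels_le (hΔ : 0 < Δ) (hlab : ∀ x y, G.Adj x y → lab x y ∈ Set.Icc 1 Δ)
    (hcompat : ∀ a b c, G.Adj a b → G.Adj b c → s a b = s b c ∨ lab a b = lab b c) :
    ∀ {x y : V} (p : G.Walk x y),
      listDelay Δ (shiftLabels Δ lab s) p.support ≤ listDelay Δ lab p.support
  | _, _, .nil => le_rfl
  | _, _, .cons _ .nil => le_rfl
  | _, _, .cons hab (.cons hbc p) => by
    have ih := listDelay_shiftLabels_le hΔ hlab hcompat (.cons hbc p)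
    simp only [Walk.support_cons] at ih ⊢
    rw [← p.cons_tail_support] at ih ⊢
    exact add_le_add (tdelay_shiftLabels_le hΔ hlab hab hbc (hcompat _ _ _ hab hbc)) ih

lemma Realizes.shiftLabels {D : V → V → ℤ} (hreal : Realizes G Δ lab D) (hΔ : 0 < Δ)
    (hlab : ∀ x y, G.Adj x y → lab x y ∈ Set.Icc 1 Δ)
    (hcompat : ∀ a b c, G.Adj a b → G.Adj b c → s a b = s b c ∨ lab a b = lab b c) :
    Realizes G Δ (shiftLabels Δ lab s) D := fun x y p hp =>
  (add_le_add_right (listDelay_shiftLabels_le hΔ hlab hcompat p) 1).trans (hreal x y p hp)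

end Relabel

namespace SimpleGraph.IsTree

open Walk

variable {V : Type*} {G : SimpleGraph V}

section Rooted

variable (hT : G.IsTree) (r : V)

noncomputable def rootPath (x : V) : G.Walk r x := (hT.existsUnique_path r x).exists.choose

lemma isPath_rootPath (x : V) : (hT.rootPath r x).IsPath :=
  (hT.existsUnique_path r x).exists.choose_spec

lemma support_rootPath_self : (hT.rootPath r r).support = [r] := by
  rw [(hT.existsUnique_path r r).unique (hT.isPath_rootPath r r) IsPath.nil]
  rfl

variable {r}

lemma rootPath_eq_concat {z x : V} (h : G.Adj z x) (hz : z ∈ (hT.rootPath r x).support) :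
    hT.rootPath r x = (hT.rootPath r z).concat h :=
  hT.isAcyclic.path_concat (hT.isPath_rootPath r z) (hT.isPath_rootPath r x) h hz

lemma mem_rootPath_or_mem_rootPath {x y : V} (h : G.Adj x y) :
    y ∈ (hT.rootPath r x).support ∨ x ∈ (hT.rootPath r y).support :=
  or_iff_not_imp_right.mpr <| hT.isAcyclic.mem_support_of_ne_mem_support_of_adj_of_isPath
    (hT.isPath_rootPath r x) (hT.isPath_rootPath r y) h

lemma existsUnique_adj_mem_rootPath {v : V} (hv : v ≠ r) :
    ∃! y, G.Adj v y ∧ y ∈ (hT.rootPath r v).support := by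
  have hnil : ¬(hT.rootPath r v).Nil := not_nil_of_ne hv.symm
  refine ⟨_, ⟨(adj_penultimate hnil).symm, getVert_mem_support _ _⟩, ?_⟩
  rintro y ⟨hy, hy_mem⟩
  exact hT.isAcyclic.eq_penultimate_of_adj_end (hT.isPath_rootPath r v) hy hy_mem

variable (r) (c : V) (B : V → Prop)

open scoped Classical in
noncomputable def potential (x : V) : ℕ :=
  (hT.rootPath r x).darts.countP fun d => B d.fst ∧ (d.fst = r → d.snd = c)

variable {c B}

open scoped Classical in
lemma potential_of_mem {z x : V} (h : G.Adj z x) (hz : z ∈ (hT.rootPath r x).support) :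
    hT.potential r c B x = hT.potential r c B z + if B z ∧ (z = r → x = c) then 1 else 0 := by
  simp only [potential, hT.rootPath_eq_concat h hz, darts_concat, List.concat_eq_append,
    List.countP_append, List.countP_singleton, decide_eq_true_eq]

open scoped Classical in
lemma max_potential {x y : V} (h : G.Adj x y) :
    max (hT.potential r c B x) (hT.potential r c B y) = hT.potential r c B x +
      if y ∉ (hT.rootPath r x).support ∧ B x ∧ (x = r → y = c) then 1 else 0 := by
  by_cases hy : y ∈ (hT.rootPath r x).support
  · rw [hT.potential_of_mem r h.symm hy]
    simp [hy]
  · rw [hT.potential_of_mem r h ((hT.mem_rootPath_or_mem_rootPath h).resolve_left hy)]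
    simp [hy]

end Rooted

open scoped Classical in
theorem exists_edgeShift (hT : G.IsTree) (B : V → Prop) :
    ∃ s : V → V → ℤ, (∀ x y, s x y = s y x) ∧
      (∀ b a c, G.Adj b a → G.Adj b c → ¬B b → s b a = s b c) ∧
      (∀ v u w, G.Adj v u → G.Adj v w → u ≠ w → (∀ x, G.Adj v x → x = u ∨ x = w) → B v →
        s v u = s v w + 1 ∨ s v w = s v u + 1) := by
  obtain ⟨r⟩ := hT.connected.nonempty
  obtain ⟨c, hc⟩ : ∃ c, ∀ y, G.Adj r y → G.Adj r c := by
    by_cases h : ∃ c, G.Adj r c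
    · exact h.imp fun c hc _ _ => hc
    · exact ⟨r, fun y hy => (h ⟨y, hy⟩).elim⟩
  let φ := hT.potential r c B
  -- `φ` grows away from `r`, so the maximum is the potential of the far endpoint of the edge.
  refine ⟨fun x y => (max (φ x) (φ y) : ℕ), fun x y => congrArg _ (max_comm _ _), ?_, ?_⟩
  · intro b a d hba hbd hb
    simp only [φ, hT.max_potential r hba, hT.max_potential r hbd, hb, false_and, and_false,
      if_false]
  · intro v u w hvu hvw huw hdeg hB
    simp only [φ, hT.max_potential r hvu, hT.max_potential r hvw, hB, true_and]
    have exactly_one : u ∉ (hT.rootPath r v).support ∧ (v = r → u = c) ↔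
        ¬(w ∉ (hT.rootPath r v).support ∧ (v = r → w = c)) := by
      by_cases hv : v = r
      · subst hv
        simp only [support_rootPath_self, List.mem_singleton, hvu.ne', hvw.ne', not_false_eq_true,
          true_and, forall_const]
        rcases hdeg c (hc u hvu) with rfl | rfl
        · exact iff_of_true rfl fun hw => huw hw.symm
        · exact iff_of_false huw (not_not.mpr rfl)
      · obtain ⟨y, ⟨hy, hy_mem⟩, hy_unique⟩ := hT.existsUnique_adj_mem_rootPath hv
        simp only [hv, false_imp_iff, and_true, not_not]
        rcases hdeg y hy with rfl | rfl
        · exact iff_of_false (not_not.mpr hy_mem) fun hw => huw (hy_unique w ⟨hvw, hw⟩).symm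
        · exact iff_of_true (fun hu => huw (hy_unique u ⟨hvu, hu⟩)) hy_mem
    by_cases hu : u ∉ (hT.rootPath r v).support ∧ (v = r → u = c)
    · rw [if_pos hu, if_neg (exactly_one.mp hu)]
      omega
    · rw [if_neg hu, if_pos (not_not.mp (mt exactly_one.mpr hu))]
      omega

end SimpleGraph.IsTree

section EqualLabels

variable {V : Type*} (G : SimpleGraph V) (lab : V → V → ℤ)

def IsEqLabelDegTwo (v : V) : Prop :=
  ∃ u w, G.Adj v u ∧ G.Adj v w ∧ u ≠ w ∧ (∀ x, G.Adj v x → x = u ∨ x = w) ∧ lab v u = lab v w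

variable {G lab}

lemma IsEqLabelDegTwo.lab_eq {b a c : V} (hb : IsEqLabelDegTwo G lab b) (ha : G.Adj b a)
    (hc : G.Adj b c) (hac : a ≠ c) : lab b a = lab b c := by
  obtain ⟨u, w, -, -, huw, hdeg, heq⟩ := hb
  rcases hdeg a ha with rfl | rfl <;> rcases hdeg c hc with rfl | rfl
  exacts [(hac rfl).elim, heq, heq.symm, (hac rfl).elim]

end EqualLabels

theorem yes_instance_has_alternating_solution_general {V : Type*} (G : SimpleGraph V)
    (hT : G.IsTree) (Δ : ℤ) (hΔ : 2 ≤ Δ) (D : V → V → ℤ)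
    (hyes : ∃ lab : V → V → ℤ, (∀ x y, lab x y = lab y x) ∧
      (∀ x y, G.Adj x y → lab x y ∈ Set.Icc 1 Δ) ∧ Realizes G Δ lab D) :
    ∃ lab : V → V → ℤ, (∀ x y, lab x y = lab y x) ∧
      (∀ x y, G.Adj x y → lab x y ∈ Set.Icc 1 Δ) ∧ Realizes G Δ lab D ∧
      ∀ v u w : V, G.Adj v u → G.Adj v w → u ≠ w →
        (∀ x, G.Adj v x → x = u ∨ x = w) → lab v u ≠ lab v w := by
  obtain ⟨lab, hsymm, hlab, hreal⟩ := hyes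
  obtain ⟨s, hs_symm, hs_const, hs_step⟩ := hT.exists_edgeShift (IsEqLabelDegTwo G lab)
  have hcompat (a b c : V) (hab : G.Adj a b) (hbc : G.Adj b c) :
      s a b = s b c ∨ lab a b = lab b c := by
    by_cases hb : IsEqLabelDegTwo G lab b
    · by_cases hac : a = c
      · exact Or.inl (hac ▸ hs_symm a b)
      · exact Or.inr (hsymm a b ▸ hb.lab_eq hab.symm hbc hac)
    · exact Or.inl (hs_symm a b ▸ hs_const b a c hab.symm hbc hb)
  refine ⟨shiftLabels Δ lab s, fun x y => by rw [shiftLabels, shiftLabels, hsymm, hs_symm],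
    fun x y _ => cycShift_mem (by omega), hreal.shiftLabels (by omega) hlab hcompat, ?_⟩
  intro v u w hvu hvw huw hdeg
  by_cases heq : lab v u = lab v w
  · rw [shiftLabels, shiftLabels, heq]
    rcases hs_step v u w hvu hvw huw hdeg ⟨u, w, hvu, hvw, huw, hdeg, heq⟩ with h | h
    · exact h ▸ cycShift_add_one_ne hΔ
    · exact h ▸ (cycShift_add_one_ne hΔ).symm
  · have hv : ¬IsEqLabelDegTwo G lab v := fun hv => heq (hv.lab_eq hvu hvw huw)
    rw [shiftLabels, shiftLabels, hs_const v u w hvu hvw hv]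
    exact fun h => heq (eq_of_cycShift_eq (hlab v u hvu) (hlab v w hvw) h)

/-- if a TTR instance `(G, D, Δ)` on a tree `G` is a yes-instance, then it has a
solution `lab` giving different labels to the two edges at every degree-2 vertex. -/
theorem yes_instance_has_alternating_solution {V : Type*} (G : SimpleGraph V)
    (hT : G.IsTree) (Δ : ℤ) (hΔ : 2 ≤ Δ) (D : V → V → ℤ) (hD : ∀ i j, 1 ≤ D i j)
    (hyes : ∃ lab : V → V → ℤ, (∀ x y, lab x y = lab y x) ∧
      (∀ x y, G.Adj x y → lab x y ∈ Set.Icc 1 Δ) ∧ Realizes G Δ lab D) :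
    ∃ lab : V → V → ℤ, (∀ x y, lab x y = lab y x) ∧
      (∀ x y, G.Adj x y → lab x y ∈ Set.Icc 1 Δ) ∧ Realizes G Δ lab D ∧
      ∀ v u w : V, G.Adj v u → G.Adj v w → u ≠ w →
        (∀ x, G.Adj v x → x = u ∨ x = w) → lab v u ≠ lab v w :=
  yes_instance_has_alternating_solution_general G hT Δ hΔ D hyes
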